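/- arXiv:1611.07658 — 2 statements merged into one kernel-verified Lean document; each statement's English description precedes it below -/
import Mathlib

section
/- Let n ≥ 3 and consider the links-and-triangles SUGM on n nodes with parameters β_L ∈ [0,1) and β_T ∈ [0,1). Fix two distinct nodes i and j and let U be the event that i and j have no common neighbor in the observed graph, i.e. there is no node h ∉ {i,j} with g_ih = g_jh = 1. Then U has positive probability and the conditional probability that g_ij = 1 given U equals β_L. -/
open MeasureTheory

/-- A Bernoulli measure on `Bool` with success probability `p`. -/
noncomputable def bern (p : ℝ) : Measure Bool :=
  ENNReal.ofReal p • Measure.dirac true + ENNReal.ofReal (1 - p) • Measure.dirac false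

/-- The links-and-triangles SUGM on `n` nodes: independently, every pair of nodes forms a
direct link with probability `βL`, and every triple of nodes forms a triangle with
probability `βT`. -/
noncomputable def sugm (n : ℕ) (βL βT : ℝ) : Measure (Finset (Fin n) → Bool) :=
  Measure.pi fun s => if s.card = 2 then bern βL else if s.card = 3 then bern βT else bern 0

/-- The observed graph: `i` and `j` are linked iff the direct link `{i, j}` formed or some
triangle `{i, j, k}` formed. -/
def edgeObs {n : ℕ} (ω : Finset (Fin n) → Bool) (i j : Fin n) : Bool :=
  ω {i, j} || decide (∃ k : Fin n, k ≠ i ∧ k ≠ j ∧ ω {i, j, k} = true)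

/-- The event that `i` and `j` have no common neighbor in the observed graph. -/
def noCommonNeighbor {n : ℕ} (i j : Fin n) : Set (Finset (Fin n) → Bool) :=
  {ω | ∀ h : Fin n, h ≠ i → h ≠ j → ¬(edgeObs ω i h = true ∧ edgeObs ω j h = true)}

/-!
On the event `U` that `i` and `j` have no common neighbour, no triangle containing `i` and `j` has
formed, so there the observed edge `ij` is exactly the direct-link indicator of `{i, j}`. Resampling
that indicator cannot create a common neighbour, so `U` is independent of it under the product
measure, and `P(g_ij = 1 | U) = P(link {i, j} forms) = β_L`. Finally `U` contains the configuration
in which nothing forms, which has probability `∏ (1 - β) > 0`.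
-/

open ProbabilityTheory

theorem MeasureTheory.Measure.pi_inter_eval_preimage_eq_mul {ι α : Type*} [Fintype ι]
    [DecidableEq ι] [MeasurableSpace α] [Countable α] [MeasurableSingletonClass α]
    (μ : ι → Measure α) [∀ i, IsProbabilityMeasure (μ i)] {A : Set (ι → α)} {i : ι}
    (hA : ∀ ω a, ω ∈ A → Function.update ω i a ∈ A) (B : Set α) :
    Measure.pi μ (A ∩ Function.eval i ⁻¹' B) = Measure.pi μ A * μ i B := by
  set S : Finset ι := Finset.univ.erase i
  set restrict : (ι → α) → (S → α) := fun ω j => ω j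
  have hindep : IndepFun restrict (Function.eval i) (Measure.pi μ) := by
    have h := (iIndepFun_pi (X := fun _ => id) (μ := μ) fun _ => aemeasurable_id).indepFun_finset
      S {i} (by simp [S]) fun j => measurable_pi_apply j
    exact h.comp measurable_id (measurable_pi_apply ⟨i, Finset.mem_singleton_self i⟩)
  have hA_restrict : restrict ⁻¹' (restrict '' A) = A := by
    refine subset_antisymm ?_ (Set.subset_preimage_image _ _)
    rintro ω ⟨ω', hω', hrestrict⟩
    have : Function.update ω' i (ω i) = ω := by
      ext j
      rcases eq_or_ne j i with rfl | hj
      · simp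
      · simpa [hj] using congrFun hrestrict ⟨j, by simp [S, hj]⟩
    exact this ▸ hA ω' (ω i) hω'
  rw [← hA_restrict, hindep.measure_inter_preimage_eq_mul _ _ (Set.to_countable _).measurableSet
    (Set.to_countable B).measurableSet, (measurePreserving_eval μ i).measure_preimage
    (Set.to_countable B).measurableSet.nullMeasurableSet]

@[simp]
lemma bern_singleton_true (p : ℝ) : bern p {true} = ENNReal.ofReal p := by
  simp [bern]

@[simp]
lemma bern_singleton_false (p : ℝ) : bern p {false} = ENNReal.ofReal (1 - p) := by
  simp [bern]

instance isFiniteMeasure_bern (p : ℝ) : IsFiniteMeasure (bern p) :=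
  ⟨by simp [bern]⟩

lemma isProbabilityMeasure_bern {p : ℝ} (hp₀ : 0 ≤ p) (hp₁ : p ≤ 1) :
    IsProbabilityMeasure (bern p) :=
  ⟨by simp [bern, ← ENNReal.ofReal_add hp₀ (sub_nonneg.2 hp₁)]⟩

section SUGM

variable {n : ℕ} {βL βT : ℝ} {ω : Finset (Fin n) → Bool}

noncomputable def sugmFactor (βL βT : ℝ) (s : Finset (Fin n)) : Measure Bool :=
  if s.card = 2 then bern βL else if s.card = 3 then bern βT else bern 0

lemma sugm_eq_pi (n : ℕ) (βL βT : ℝ) : sugm n βL βT = Measure.pi (sugmFactor βL βT) := rfl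

instance isFiniteMeasure_sugmFactor (βL βT : ℝ) (s : Finset (Fin n)) :
    IsFiniteMeasure (sugmFactor βL βT s) := by
  unfold sugmFactor
  split_ifs <;> infer_instance

lemma isProbabilityMeasure_sugmFactor (hL : βL ∈ Set.Icc 0 1) (hT : βT ∈ Set.Icc 0 1)
    (s : Finset (Fin n)) : IsProbabilityMeasure (sugmFactor βL βT s) := by
  unfold sugmFactor
  split_ifs
  exacts [isProbabilityMeasure_bern hL.1 hL.2, isProbabilityMeasure_bern hT.1 hT.2,
    isProbabilityMeasure_bern le_rfl zero_le_one]

lemma isProbabilityMeasure_sugm (hL : βL ∈ Set.Icc 0 1) (hT : βT ∈ Set.Icc 0 1) :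
    IsProbabilityMeasure (sugm n βL βT) :=
  have := isProbabilityMeasure_sugmFactor (n := n) hL hT
  sugm_eq_pi n βL βT ▸ inferInstance

lemma sugm_singleton_false_pos (hL : βL < 1) (hT : βT < 1) :
    0 < sugm n βL βT {fun _ => false} := by
  rw [sugm_eq_pi, ← Set.univ_pi_singleton, Measure.pi_pi, pos_iff_ne_zero,
    Finset.prod_ne_zero_iff]
  intro s _
  unfold sugmFactor
  split_ifs <;> rw [bern_singleton_false] <;> exact (ENNReal.ofReal_pos.2 (by linarith)).ne'

lemma sugm_inter_link_eq_mul (hL : βL ∈ Set.Icc 0 1) (hT : βT ∈ Set.Icc 0 1)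
    {t : Finset (Fin n)} (ht : t.card = 2) {A : Set (Finset (Fin n) → Bool)}
    (hA : ∀ ω b, ω ∈ A → Function.update ω t b ∈ A) :
    sugm n βL βT (A ∩ {ω | ω t = true}) = sugm n βL βT A * ENNReal.ofReal βL := by
  have := isProbabilityMeasure_sugmFactor (n := n) hL hT
  refine (Measure.pi_inter_eval_preimage_eq_mul (sugmFactor βL βT) hA {true}).trans ?_
  simp [sugmFactor, ht, sugm_eq_pi]

lemma edgeObs_update_of_ne {t : Finset (Fin n)} (ht : t.card = 2)
    {a h : Fin n} (hah : a ≠ h) (hne : {a, h} ≠ t) (b : Bool) :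
    edgeObs (Function.update ω t b) a h = edgeObs ω a h := by
  have htriple : ∀ k, k ≠ a → k ≠ h → ({a, h, k} : Finset (Fin n)) ≠ t := by
    intro k hka hkh heq
    have := Finset.card_eq_three.mpr ⟨a, h, k, hah, hka.symm, hkh.symm, rfl⟩
    rw [heq, ht] at this
    cases this
  unfold edgeObs
  rw [Function.update_of_ne hne]
  congr 2
  exact propext <| exists_congr fun k => and_congr_right fun hka => and_congr_right fun hkh => by
    rw [Function.update_of_ne (htriple k hka hkh)]

lemma edgeObs_of_triangle {i j k : Fin n} (hji : j ≠ i) (hjk : j ≠ k)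
    (h : ω {i, j, k} = true) : edgeObs ω i k = true := by
  simp only [edgeObs, Bool.or_eq_true, decide_eq_true_eq]
  exact Or.inr ⟨j, hji, hjk, by rwa [Finset.pair_comm]⟩

lemma edgeObs_eq_of_mem_noCommonNeighbor {i j : Fin n} (hij : i ≠ j)
    (hω : ω ∈ noCommonNeighbor i j) : edgeObs ω i j = ω {i, j} := by
  suffices ¬∃ k, k ≠ i ∧ k ≠ j ∧ ω {i, j, k} = true by simp [edgeObs, this]
  rintro ⟨k, hki, hkj, hk⟩
  exact hω k hki hkj ⟨edgeObs_of_triangle hij.symm (Ne.symm hkj) hk,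
    edgeObs_of_triangle hij (Ne.symm hki) (by rwa [Finset.insert_comm])⟩

lemma update_mem_noCommonNeighbor {i j : Fin n} (hij : i ≠ j)
    (hω : ω ∈ noCommonNeighbor i j) (b : Bool) :
    Function.update ω {i, j} b ∈ noCommonNeighbor i j := by
  intro h hhi hhj
  have hne : ∀ a, ({a, h} : Finset (Fin n)) ≠ {i, j} := fun a heq => by
    have : h ∈ ({i, j} : Finset (Fin n)) := heq ▸ by simp
    simp_all
  rw [edgeObs_update_of_ne (Finset.card_pair hij) (Ne.symm hhi) (hne i),
    edgeObs_update_of_ne (Finset.card_pair hij) (Ne.symm hhj) (hne j)]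
  exact hω h hhi hhj

end SUGM

theorem stmt5_general (n : ℕ) (βL βT : ℝ)
    (hβL : βL ∈ Set.Ico (0 : ℝ) 1) (hβT : βT ∈ Set.Ico (0 : ℝ) 1)
    (i j : Fin n) (hij : i ≠ j) :
    0 < sugm n βL βT (noCommonNeighbor i j) ∧
      ProbabilityTheory.cond (sugm n βL βT) (noCommonNeighbor i j)
          {ω | edgeObs ω i j = true} =
        ENNReal.ofReal βL := by
  have hL := Set.Ico_subset_Icc_self hβL
  have hT := Set.Ico_subset_Icc_self hβT
  have := isProbabilityMeasure_sugm (n := n) hL hT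
  have hpos : 0 < sugm n βL βT (noCommonNeighbor i j) := by
    refine (sugm_singleton_false_pos hβL.2 hβT.2).trans_le (measure_mono ?_)
    simp [noCommonNeighbor, edgeObs]
  have hlink : noCommonNeighbor i j ∩ {ω | edgeObs ω i j = true} =
      noCommonNeighbor i j ∩ {ω | ω {i, j} = true} := by
    ext ω
    simp only [Set.mem_inter_iff, Set.mem_ofPred_eq]
    exact and_congr_right fun hω => by rw [edgeObs_eq_of_mem_noCommonNeighbor hij hω]
  refine ⟨hpos, ?_⟩
  rw [cond_apply (Set.to_countable _).measurableSet, hlink,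
    sugm_inter_link_eq_mul hL hT (Finset.card_pair hij) fun _ b hω =>
      update_mem_noCommonNeighbor hij hω b,
    ← mul_assoc, ENNReal.inv_mul_cancel hpos.ne' (measure_ne_top _ _), one_mul]

/-- In the links-and-triangles SUGM on `n ≥ 3` nodes with parameters
`βL, βT ∈ [0,1)`, for distinct nodes `i ≠ j`, the event `U` that `i` and `j` have no
common neighbor in the observed graph has positive probability, and the conditional
probability that the edge `ij` is present given `U` equals `βL`. -/
theorem stmt5 (n : ℕ) (hn : 3 ≤ n) (βL βT : ℝ)
    (hβL : βL ∈ Set.Ico (0 : ℝ) 1) (hβT : βT ∈ Set.Ico (0 : ℝ) 1)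
    (i j : Fin n) (hij : i ≠ j) :
    0 < sugm n βL βT (noCommonNeighbor i j) ∧
      ProbabilityTheory.cond (sugm n βL βT) (noCommonNeighbor i j)
          {ω | edgeObs ω i j = true} =
        ENNReal.ofReal βL :=
  stmt5_general n βL βT hβL hβT i j hij
end

section
/- Fix an integer n ≥ 3 and β_L ∈ (0,1). Then the function β_T ↦ β_T + (1−β_T)·(β_L + (1−β_L)(1−(1−β_T)^{n−3}))³ is strictly increasing on (0,1). Consequently the map (β_L, β_T) ↦ (β_L, β_T + (1−β_T)·q̃_L(β_L,β_T)³), where q̃_L(β_L,β_T) = β_L + (1−β_L)(1−(1−β_T)^{n−3}), is injective on (0,1)². -/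
/-!
Writing `βT + (1 - βT) q³ = 1 - (1 - βT)(1 - q³)`, the claim is that the product of the two
positive factors `1 - βT` and `1 - q̃L³` is strictly decreasing in `βT`. The first factor is
strictly decreasing, and the second is weakly decreasing, since `q̃L ∈ (0, 1)` is increasing
in `βT`.
Injectivity of the pair map follows because it keeps `βL` as first coordinate.
-/

open Set

/-- The probability `q̃L` that a pair of nodes is linked, directly or through a triangle,
where `m = n - 3`. -/
def linkProb (m : ℕ) (βL βT : ℝ) : ℝ := βL + (1 - βL) * (1 - (1 - βT) ^ m)

def triangleProb (m : ℕ) (βL βT : ℝ) : ℝ := βT + (1 - βT) * linkProb m βL βT ^ 3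

lemma linkProb_mem_Ioo {m : ℕ} {βL βT : ℝ} (hL : βL ∈ Ioo (0 : ℝ) 1) (hT : βT ∈ Ioo (0 : ℝ) 1) :
    linkProb m βL βT ∈ Ioo (0 : ℝ) 1 := by
  obtain ⟨hL0, hL1⟩ := hL
  have hpos : 0 < (1 - βT) ^ m := pow_pos (by linarith [hT.2]) m
  have hle : (1 - βT) ^ m ≤ 1 := pow_le_one₀ (by linarith [hT.2]) (by linarith [hT.1])
  unfold linkProb
  constructor <;> nlinarith

lemma linkProb_monotoneOn (m : ℕ) {βL : ℝ} (hL : βL ≤ 1) :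
    MonotoneOn (linkProb m βL) (Iic 1) := by
  intro x hx y hy hxy
  have : (1 - y) ^ m ≤ (1 - x) ^ m :=
    pow_le_pow_left₀ (sub_nonneg.2 hy) (by linarith) m
  unfold linkProb
  nlinarith

lemma strictAntiOn_one_sub_mul {g : ℝ → ℝ} {s : Set ℝ} (hs : s ⊆ Iio 1)
    (hg : AntitoneOn g s) (hg_pos : ∀ t ∈ s, 0 < g t) :
    StrictAntiOn (fun t => (1 - t) * g t) s := by
  intro x hx y hy hxy
  have hy1 : y < 1 := hs hy
  calc (1 - y) * g y < (1 - x) * g y := by nlinarith [hg_pos y hy]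
    _ ≤ (1 - x) * g x := by nlinarith [hg hx hy hxy.le]

lemma triangleProb_strictMonoOn (m : ℕ) {βL : ℝ} (hL : βL ∈ Ioo (0 : ℝ) 1) :
    StrictMonoOn (triangleProb m βL) (Ioo 0 1) := by
  have hq := fun t (ht : t ∈ Ioo (0 : ℝ) 1) => linkProb_mem_Ioo (m := m) hL ht
  have hanti : StrictAntiOn (fun t => (1 - t) * (1 - linkProb m βL t ^ 3)) (Ioo 0 1) := by
    refine strictAntiOn_one_sub_mul (fun t ht => ht.2) (fun x hx y hy hxy => ?_) fun t ht => ?_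
    · have := linkProb_monotoneOn m hL.2.le hx.2.le hy.2.le hxy
      have := pow_le_pow_left₀ (hq x hx).1.le this 3
      linarith
    · have := pow_lt_one₀ (hq t ht).1.le (hq t ht).2 three_ne_zero
      linarith
  intro x hx y hy hxy
  have := hanti hx hy hxy
  simp only [triangleProb] at this ⊢
  linarith

theorem stmt6_general (n : ℕ) :
    (∀ βL : ℝ, βL ∈ Set.Ioo (0 : ℝ) 1 →
      StrictMonoOn
        (fun βT : ℝ => βT + (1 - βT) * (βL + (1 - βL) * (1 - (1 - βT) ^ (n - 3))) ^ 3)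
        (Set.Ioo (0 : ℝ) 1)) ∧
    Set.InjOn
      (fun β : ℝ × ℝ =>
        (β.1, β.2 + (1 - β.2) * (β.1 + (1 - β.1) * (1 - (1 - β.2) ^ (n - 3))) ^ 3))
      (Set.Ioo (0 : ℝ) 1 ×ˢ Set.Ioo (0 : ℝ) 1) := by
  have hmono : ∀ βL : ℝ, βL ∈ Ioo (0 : ℝ) 1 → StrictMonoOn (triangleProb (n - 3) βL) (Ioo 0 1) :=
    fun βL hL => triangleProb_strictMonoOn (n - 3) hL
  refine ⟨hmono, ?_⟩
  rintro ⟨a, b⟩ ⟨ha, hb⟩ ⟨c, d⟩ ⟨-, hd⟩ heq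
  obtain ⟨rfl, h⟩ := Prod.mk.inj heq
  exact congrArg (a, ·) ((hmono a ha).injOn hb hd h)

/-- Fix `n ≥ 3` and `βL ∈ (0,1)`.  The function
`βT ↦ βT + (1-βT) * (βL + (1-βL)*(1-(1-βT)^(n-3)))³` is strictly increasing on `(0,1)`;
consequently `(βL, βT) ↦ (βL, βT + (1-βT) * q̃L(βL,βT)³)` is injective on `(0,1)²`. -/
theorem stmt6 (n : ℕ) (hn : 3 ≤ n) :
    (∀ βL : ℝ, βL ∈ Set.Ioo (0 : ℝ) 1 →
      StrictMonoOn
        (fun βT : ℝ => βT + (1 - βT) * (βL + (1 - βL) * (1 - (1 - βT) ^ (n - 3))) ^ 3)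
        (Set.Ioo (0 : ℝ) 1)) ∧
    Set.InjOn
      (fun β : ℝ × ℝ =>
        (β.1, β.2 + (1 - β.2) * (β.1 + (1 - β.1) * (1 - (1 - β.2) ^ (n - 3))) ^ 3))
      (Set.Ioo (0 : ℝ) 1 ×ˢ Set.Ioo (0 : ℝ) 1) :=
  stmt6_general n
end
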